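/- For every σ > 0 and μ ∈ ℝ: g₀(|μ|) = 0; and if σ > μ coth μ (where μ coth μ is interpreted as 1 at μ = 0), then, letting ω₁ denote the unique nonnegative zero of g₁, there exists ω ∈ (|μ|, ω₁) with g₀(ω) = 0. -/
import Mathlib

/-- `ω coth ω`, interpreted as `1` at `ω = 0`. -/
noncomputable def wcoth (ω : ℝ) : ℝ :=
  if ω = 0 then 1 else ω * Real.cosh ω / Real.sinh ω

/-- `ω / sinh ω`, interpreted as `1` at `ω = 0`. -/
noncomputable def wsinh (ω : ℝ) : ℝ :=
  if ω = 0 then 1 else ω / Real.sinh ω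

/-- `g₁(ω) = ω² − 2σ·ω coth ω − 2σ·√(μ² + ω²/sinh²ω) − μ²`. -/
noncomputable def gm (σ μ ω : ℝ) : ℝ :=
  ω^2 - 2*σ*wcoth ω - 2*σ*Real.sqrt (μ^2 + (wsinh ω)^2) - μ^2

/-- `g₀(ω) = ω² − 2σ·ω coth ω + 2σ·√(μ² + ω²/sinh²ω) − μ²`. -/
noncomputable def gp (σ μ ω : ℝ) : ℝ :=
  ω^2 - 2*σ*wcoth ω + 2*σ*Real.sqrt (μ^2 + (wsinh ω)^2) - μ^2

/-- `μ coth μ`, interpreted as `1` at `μ = 0`. -/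
noncomputable def muCoth (μ : ℝ) : ℝ :=
  if μ = 0 then 1 else μ * Real.cosh μ / Real.sinh μ

lemma wcoth_sq (ω : ℝ) : (wcoth ω)^2 = ω^2 + (wsinh ω)^2 := by
  unfold wcoth wsinh
  split
  · subst ‹ω = 0›; norm_num
  · have hs : Real.sinh ω ≠ 0 := fun h => ‹ω ≠ 0› (Real.sinh_eq_zero.1 h)
    field_simp
    nlinarith [Real.cosh_sq ω]

lemma wsinh_pos {ω : ℝ} (h : 0 ≤ ω) : 0 < wsinh ω := by
  unfold wsinh
  split
  · norm_num
  · have h0 : 0 < ω := lt_of_le_of_ne h (Ne.symm ‹ω ≠ 0›)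
    exact div_pos h0 (Real.sinh_pos_iff.2 h0)

lemma wcoth_pos {ω : ℝ} (h : 0 ≤ ω) : 0 < wcoth ω := by
  unfold wcoth
  split
  · norm_num
  · have h0 : 0 < ω := lt_of_le_of_ne h (Ne.symm ‹ω ≠ 0›)
    exact div_pos (mul_pos h0 (Real.cosh_pos ω)) (Real.sinh_pos_iff.2 h0)

lemma wcoth_eq_sqrt {ω : ℝ} (h : 0 ≤ ω) :
    wcoth ω = Real.sqrt (ω^2 + (wsinh ω)^2) := by
  rw [← wcoth_sq, Real.sqrt_sq (wcoth_pos h).le]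

lemma wcoth_abs (μ : ℝ) : wcoth |μ| = muCoth μ := by
  unfold wcoth muCoth
  rcases lt_trichotomy μ 0 with h | h | h
  · rw [abs_of_neg h]
    rw [if_neg (neg_ne_zero.2 h.ne), if_neg h.ne, Real.cosh_neg, Real.sinh_neg]
    ring
  · subst h; simp
  · simp [abs_of_pos h, h.ne']

lemma gp_abs (σ μ : ℝ) : gp σ μ |μ| = 0 := by
  unfold gp
  have h1 : μ ^ 2 = |μ| ^ 2 := (sq_abs μ).symm
  rw [h1, ← wcoth_eq_sqrt (abs_nonneg μ)]
  ring

lemma gp_neg_of (σ μ a : ℝ) (hσ : 0 < σ) (ha : |μ| < a)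
    (hh : wcoth a + Real.sqrt (μ^2 + (wsinh a)^2) < 2*σ) : gp σ μ a < 0 := by
  set F := Real.sqrt (μ^2 + (wsinh a)^2) with hF
  have ha0 : (0:ℝ) ≤ a := (abs_nonneg μ).trans ha.le
  have hF2 : F^2 = μ^2 + (wsinh a)^2 := Real.sq_sqrt (by positivity)
  have hG2 : (wcoth a)^2 = a^2 + (wsinh a)^2 := wcoth_sq a
  have hFnn : 0 ≤ F := Real.sqrt_nonneg _
  have hμa : μ^2 < a^2 := by
    calc μ^2 = |μ|^2 := (sq_abs μ).symm
    _ < a^2 := by nlinarith [abs_nonneg μ]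
  have hFG : F < wcoth a := by
    rw [hF, wcoth_eq_sqrt ha0]
    exact Real.sqrt_lt_sqrt (by positivity) (by linarith)
  have heq : gp σ μ a = (wcoth a - F) * (wcoth a + F - 2*σ) := by
    unfold gp
    rw [← hF]
    nlinarith [hF2, hG2]
  rw [heq]
  exact mul_neg_of_pos_of_neg (by linarith) (by linarith)

lemma continuousOn_aux (σ μ : ℝ) :
    ContinuousOn (fun ω => ω^2 - 2*σ*(ω*Real.cosh ω/Real.sinh ω)
      + 2*σ*Real.sqrt (μ^2 + (ω/Real.sinh ω)^2) - μ^2) (Set.Ioi (0:ℝ)) := by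
  have hs : ∀ x ∈ Set.Ioi (0:ℝ), Real.sinh x ≠ 0 := fun x hx => (Real.sinh_pos_iff.2 hx).ne'
  apply ContinuousOn.sub _ continuousOn_const
  apply ContinuousOn.add
  · apply ContinuousOn.sub (by fun_prop)
    exact continuousOn_const.mul (ContinuousOn.div (by fun_prop) (by fun_prop) hs)
  · apply continuousOn_const.mul
    apply ContinuousOn.sqrt
    apply continuousOn_const.add
    exact (ContinuousOn.div (by fun_prop) (by fun_prop) hs).pow 2

lemma gp_eq_on (σ μ : ℝ) : Set.EqOn (gp σ μ)
    (fun ω => ω^2 - 2*σ*(ω*Real.cosh ω/Real.sinh ω)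
      + 2*σ*Real.sqrt (μ^2 + (ω/Real.sinh ω)^2) - μ^2) (Set.Ioi (0:ℝ)) := by
  intro x hx
  have hx0 : x ≠ 0 := (Set.mem_Ioi.1 hx).ne'
  simp only [gp, wcoth, wsinh, if_neg hx0]

lemma key (σ μ a ω₁ : ℝ) (hσ : 0 < σ) (ha : |μ| < a) (haω : a < ω₁)
    (hgp1 : 0 < gp σ μ ω₁)
    (hh : wcoth a + Real.sqrt (μ^2 + (wsinh a)^2) < 2*σ) :
    ∃ ω ∈ Set.Ioo |μ| ω₁, gp σ μ ω = 0 := by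
  have ha0 : (0:ℝ) < a := lt_of_le_of_lt (abs_nonneg μ) ha
  have hgpa : gp σ μ a < 0 := gp_neg_of σ μ a hσ ha hh
  have hcont : ContinuousOn (gp σ μ) (Set.Icc a ω₁) := by
    apply ContinuousOn.congr ((continuousOn_aux σ μ).mono ?_) (((gp_eq_on σ μ).mono ?_)) <;>
      exact fun x hx => lt_of_lt_of_le ha0 hx.1
  have h0 : (0:ℝ) ∈ Set.Ioo (gp σ μ a) (gp σ μ ω₁) := ⟨hgpa, hgp1⟩
  obtain ⟨ω, hω, hω0⟩ := intermediate_value_Ioo haω.le hcont h0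
  exact ⟨ω, ⟨ha.trans hω.1, hω.2⟩, hω0⟩

/-- Lemma 2.1, second part: `g₀(|μ|) = 0`, and if `σ > μ coth μ` then `g₀`
has a second zero in `(|μ|, ω₁)`, where `ω₁` is the unique nonnegative zero of `g₁`. -/
theorem stmt12 (σ μ : ℝ) (hσ : 0 < σ) :
    gp σ μ |μ| = 0 ∧
    (muCoth μ < σ → ∀ ω₁ : ℝ, 0 ≤ ω₁ → gm σ μ ω₁ = 0 →
      ∃ ω ∈ Set.Ioo |μ| ω₁, gp σ μ ω = 0) := by
  refine ⟨gp_abs σ μ, fun hmc ω₁ hω₁ hgm => ?_⟩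
  set F := Real.sqrt (μ^2 + (wsinh ω₁)^2) with hF
  have hs1 : 0 < wsinh ω₁ := wsinh_pos hω₁
  have hFpos : 0 < F := Real.sqrt_pos.2 (by nlinarith [sq_nonneg μ])
  have hgp1 : 0 < gp σ μ ω₁ := by
    have h : gp σ μ ω₁ = gm σ μ ω₁ + 4*σ*F := by unfold gp gm; rw [← hF]; ring
    rw [h, hgm]; nlinarith
  have hμω : |μ| < ω₁ := by
    have hG := wcoth_pos hω₁
    have hFnn : 0 ≤ F := hFpos.le
    have he : ω₁^2 - μ^2 = 2*σ*(wcoth ω₁) + 2*σ*F := by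
      unfold gm at hgm; rw [← hF] at hgm; linarith
    have h2 : |μ|^2 < ω₁^2 := by rw [sq_abs]; nlinarith
    exact lt_of_pow_lt_pow_left₀ 2 hω₁ h2
  by_cases hμ : μ = 0
  · subst hμ
    have h1σ : 1 < σ := by simpa [muCoth] using hmc
    have h0ω : (0:ℝ) < ω₁ := by simpa using hμω
    have htend : Filter.Tendsto Real.cosh (nhdsWithin 0 (Set.Ioi (0:ℝ))) (nhds 1) := by
      simpa [Real.cosh_zero] using
        (Real.continuous_cosh.tendsto (0:ℝ)).mono_left nhdsWithin_le_nhds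
    have hev := (htend.eventually_lt_const (by linarith : (1:ℝ) < 2*σ - 1)).and
      (((eventually_lt_nhds h0ω).filter_mono nhdsWithin_le_nhds).and
        eventually_mem_nhdsWithin)
    obtain ⟨a, hca, haω, haI⟩ := hev.exists
    have ha : (0:ℝ) < a := haI
    have hsa : 0 < Real.sinh a := Real.sinh_pos_iff.2 ha
    have hle : a / Real.sinh a ≤ 1 := (div_le_one hsa).2 (Real.self_le_sinh_iff.2 ha.le)
    have hwc : wcoth a = Real.cosh a * (a / Real.sinh a) := by
      rw [wcoth, if_neg ha.ne']; ring
    have hws : wsinh a = a / Real.sinh a := by rw [wsinh, if_neg ha.ne']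
    have hsq : Real.sqrt ((0:ℝ)^2 + (wsinh a)^2) = wsinh a := by
      rw [(by ring : (0:ℝ)^2 + (wsinh a)^2 = (wsinh a)^2), Real.sqrt_sq (wsinh_pos ha.le).le]
    have hcp : 0 < Real.cosh a := Real.cosh_pos a
    have hh : wcoth a + Real.sqrt ((0:ℝ)^2 + (wsinh a)^2) < 2*σ := by
      rw [hsq, hwc, hws]; nlinarith
    exact key σ 0 a ω₁ hσ (by simpa using ha) haω hgp1 hh
  · have hc0 : 0 < |μ| := abs_pos.2 hμ
    have hsc : Real.sinh |μ| ≠ 0 := (Real.sinh_pos_iff.2 hc0).ne'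
    set H := fun ω => ω*Real.cosh ω/Real.sinh ω
      + Real.sqrt (μ^2 + (ω/Real.sinh ω)^2) with hHdef
    have hHc : ContinuousAt H |μ| := by
      apply ContinuousAt.add
      · exact ContinuousAt.div (by fun_prop) (by fun_prop) hsc
      · apply ContinuousAt.sqrt
        exact continuousAt_const.add ((ContinuousAt.div (by fun_prop) (by fun_prop) hsc).pow 2)
    have hHval : H |μ| = 2 * muCoth μ := by
      have h1 : wcoth |μ| = |μ| * Real.cosh |μ| / Real.sinh |μ| := by
        rw [wcoth, if_neg hc0.ne']
      have h2 : wsinh |μ| = |μ| / Real.sinh |μ| := by rw [wsinh, if_neg hc0.ne']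
      have h3 : Real.sqrt (μ^2 + (wsinh |μ|)^2) = wcoth |μ| := by
        rw [wcoth_eq_sqrt (abs_nonneg μ), sq_abs]
      simp only [hHdef]
      rw [← h1, ← h2, h3, ← wcoth_abs]
      ring
    have hlt : H |μ| < 2*σ := by rw [hHval]; linarith
    have htend : Filter.Tendsto H (nhdsWithin |μ| (Set.Ioi |μ|)) (nhds (H |μ|)) :=
      hHc.continuousWithinAt
    have hev := (htend.eventually_lt_const hlt).and
      (((eventually_lt_nhds hμω).filter_mono nhdsWithin_le_nhds).and
        eventually_mem_nhdsWithin)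
    obtain ⟨a, hHa, haω, haI⟩ := hev.exists
    have ha : |μ| < a := haI
    have ha0 : a ≠ 0 := (hc0.trans ha).ne'
    have hh : wcoth a + Real.sqrt (μ^2 + (wsinh a)^2) < 2*σ := by
      rw [wcoth, if_neg ha0, wsinh, if_neg ha0]
      exact hHa
    exact key σ μ a ω₁ hσ ha haω hgp1 hh
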